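/- Let R > 0, let f and g be complex-valued functions analytic on the closed ball of radius R centered at 0 in ℂ, let 0 < r < R, and let ε ∈ ℂ with |ε| < r(R - r). Then (1/(2πi)) ∮_{|z| = r} (∑_{n=1}^∞ (ε^n / (n! z^n)) f^{(n-1)}(z)) g(z) dz = ∑_{n=1}^∞ (ε^n / (n! (n-1)!)) ∑_{m + s = n - 1} C(n-1, m) f^{(n-1+m)}(0) g^{(s)}(0), and both the integrand series and the right-hand double series converge. (This is the full exact variation formula for the entries of the period matrix under Schiffer variation, Lemma 3.1 of the paper, expressed as a statement about analytic functions: the left side is the correction term π_{ij}(Γ*_ε) − π_{ij}(Γ) and the right side is its complete Taylor expansion in ε.) -/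

import Mathlib

/-!
Term by term, the Cauchy integral formula turns `∮ f⁽ⁿ⁾(z) g(z) / z ^ (n + 1) dz` into
`2πi (f⁽ⁿ⁾ g)⁽ⁿ⁾(0) / n!`, which Leibniz' rule expands into the inner sum. Summation and
integration may be exchanged by a Weierstrass M-test: Cauchy's estimate on the discs of
radius `R - r` centred on the circle `|z| = r` gives `|f⁽ⁿ⁾(z)| ≤ n! M / (R - r) ^ n` there, with
`M` a bound for `|f|` on `|z| ≤ R`, so the `n`-th term is `O((|ε| / (r (R - r))) ^ n)` uniformly
on the circle.
-/

open Metric Complex Finset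

theorem hasSum_circleIntegral_tsum_of_norm_le {E : Type*} [NormedAddCommGroup E]
    [NormedSpace ℂ E] [CompleteSpace E] {F : ℕ → ℂ → E} {c : ℂ} {R : ℝ} {u : ℕ → ℝ}
    (hF : ∀ n, CircleIntegrable (F n) c R) (hu : Summable u)
    (hFu : ∀ n, ∀ z ∈ sphere c |R|, ‖F n z‖ ≤ u n) :
    HasSum (fun n => ∮ z in C(c, R), F n z) (∮ z in C(c, R), ∑' n, F n z) := by
  refine intervalIntegral.hasSum_integral_of_dominated_convergence (fun n _ => |R| * u n)
    (fun n => (hF n).out.def'.aestronglyMeasurable) (fun n => ?_)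
    (.of_forall fun _ _ => hu.mul_left _) intervalIntegrable_const
    (.of_forall fun θ _ => ?_)
  · refine .of_forall fun θ _ => ?_
    rw [norm_smul, deriv_circleMap, norm_mul, norm_circleMap_zero, norm_I, mul_one]
    exact mul_le_mul_of_nonneg_left (hFu n _ (circleMap_mem_sphere' c R θ)) (abs_nonneg R)
  · exact (Summable.of_norm_bounded hu
      fun n => hFu n _ (circleMap_mem_sphere' c R θ)).hasSum.const_smul _

section IteratedDeriv

variable {𝕜 : Type*} [NontriviallyNormedField 𝕜]

theorem iteratedDeriv_iteratedDeriv {F : Type*} [NormedAddCommGroup F] [NormedSpace 𝕜 F]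
    (m k : ℕ) (f : 𝕜 → F) : iteratedDeriv m (iteratedDeriv k f) = iteratedDeriv (k + m) f := by
  simp only [iteratedDeriv_eq_iterate, Nat.add_comm k, Function.iterate_add_apply]

theorem AnalyticOnNhd.iteratedDeriv {F : Type*} [NormedAddCommGroup F] [NormedSpace 𝕜 F]
    [CompleteSpace F] {f : 𝕜 → F} {s : Set 𝕜} (hf : AnalyticOnNhd 𝕜 f s) (n : ℕ) :
    AnalyticOnNhd 𝕜 (iteratedDeriv n f) s := by
  rw [iteratedDeriv_eq_iterate]
  exact hf.iterated_deriv n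

theorem iteratedDeriv_fun_mul_eq_sum_antidiagonal {𝔸 : Type*} [NormedCommRing 𝔸]
    [NormedAlgebra 𝕜 𝔸] {f g : 𝕜 → 𝔸} {x : 𝕜} {n : ℕ}
    (hf : ContDiffAt 𝕜 n f x) (hg : ContDiffAt 𝕜 n g x) :
    iteratedDeriv n (fun y => f y * g y) x = ∑ p ∈ antidiagonal n,
      n.choose p.1 * iteratedDeriv p.1 f x * iteratedDeriv p.2 g x := by
  rw [iteratedDeriv_fun_mul hf hg, Nat.sum_antidiagonal_eq_sum_range_succ
    (fun i j => (n.choose i : 𝔸) * iteratedDeriv i f x * iteratedDeriv j g x)]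

end IteratedDeriv

theorem Complex.norm_iteratedDeriv_le_of_closedBall_subset {E : Type*} [NormedAddCommGroup E]
    [NormedSpace ℂ E] [CompleteSpace E] {f : ℂ → E} {s : Set ℂ} {z : ℂ} {ρ M : ℝ} (hρ : 0 < ρ)
    (hs : closedBall z ρ ⊆ s) (hf : DifferentiableOn ℂ f s) (hM : ∀ w ∈ s, ‖f w‖ ≤ M)
    (n : ℕ) : ‖iteratedDeriv n f z‖ ≤ n.factorial * M / ρ ^ n :=
  norm_iteratedDeriv_le_of_forall_mem_sphere_norm_le n hρ
    ((hf.mono (closure_ball_subset_closedBall.trans hs)).diffContOnCl)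
    fun w hw => hM w (hs (sphere_subset_closedBall hw))

-- Indexed from `0`: the `n`-th terms are the paper's terms of index `n + 1`.
noncomputable def schifferTerm (ε : ℂ) (f : ℂ → ℂ) (n : ℕ) (z : ℂ) : ℂ :=
  ε ^ (n + 1) / (((n + 1).factorial : ℂ) * z ^ (n + 1)) * iteratedDeriv n f z

noncomputable def schifferCoeff (ε : ℂ) (f g : ℂ → ℂ) (n : ℕ) : ℂ :=
  ε ^ (n + 1) / (((n + 1).factorial : ℂ) * (n.factorial : ℂ)) *
    ∑ p ∈ antidiagonal n,
      (n.choose p.1 : ℂ) * iteratedDeriv (n + p.1) f 0 * iteratedDeriv p.2 g 0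

variable {ε : ℂ} {f g : ℂ → ℂ} {r R : ℝ}

theorem norm_schifferTerm_le {M : ℝ} (hf : DifferentiableOn ℂ f (closedBall 0 R))
    (hM : ∀ w ∈ closedBall 0 R, ‖f w‖ ≤ M) (hr : 0 < r) (hrR : r < R) {z : ℂ}
    (hz : z ∈ sphere 0 r) (n : ℕ) :
    ‖schifferTerm ε f n z‖ ≤ ‖ε‖ * M / r * (‖ε‖ / (r * (R - r))) ^ n := by
  have hzr : ‖z‖ = r := by simpa using hz
  have hball : closedBall z (R - r) ⊆ closedBall 0 R :=
    closedBall_subset_closedBall' (by rw [dist_zero_right, hzr, sub_add_cancel])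
  have hcauchy := norm_iteratedDeriv_le_of_closedBall_subset (sub_pos.2 hrR) hball hf hM n
  have hfac : (n.factorial : ℝ) ≤ (n + 1).factorial := mod_cast Nat.factorial_le n.le_succ
  rw [schifferTerm, norm_mul, norm_div, norm_mul, norm_pow, norm_pow, Complex.norm_natCast, hzr]
  calc ‖ε‖ ^ (n + 1) / ((n + 1).factorial * r ^ (n + 1)) * ‖iteratedDeriv n f z‖
      ≤ ‖ε‖ ^ (n + 1) / (n.factorial * r ^ (n + 1)) * (n.factorial * M / (R - r) ^ n) := by
        gcongr
    _ = ‖ε‖ * M / r * (‖ε‖ / (r * (R - r))) ^ n := by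
        rw [div_pow, mul_pow]
        field_simp [(sub_pos.2 hrR).ne']
        ring

theorem summable_schifferTerm (hf : DifferentiableOn ℂ f (closedBall 0 R)) (hr : 0 < r)
    (hrR : r < R) (hε : ‖ε‖ < r * (R - r)) {z : ℂ} (hz : z ∈ sphere 0 r) :
    Summable fun n => schifferTerm ε f n z := by
  obtain ⟨M, hM⟩ :=
    (isCompact_closedBall (0 : ℂ) R).exists_bound_of_continuousOn hf.continuousOn
  have hratio : ‖ε‖ / (r * (R - r)) < 1 := (div_lt_one (by nlinarith)).2 hε
  exact .of_norm_bounded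
    ((summable_geometric_of_lt_one (by positivity) hratio).mul_left (‖ε‖ * M / r))
    (norm_schifferTerm_le hf hM hr hrR hz)

theorem circleIntegral_schifferTerm_mul (hf : AnalyticOnNhd ℂ f (closedBall 0 r))
    (hg : AnalyticOnNhd ℂ g (closedBall 0 r)) (hr : 0 < r) (n : ℕ) :
    (∮ z in C(0, r), schifferTerm ε f n z * g z) = 2 * Real.pi * I * schifferCoeff ε f g n := by
  have hfn := hf.iteratedDeriv n
  have hcauchy := DifferentiableOn.circleIntegral_one_div_sub_center_pow_smul hr n
    (hfn.mul hg).differentiableOn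
  have hleibniz := iteratedDeriv_fun_mul_eq_sum_antidiagonal (x := 0) (n := n)
    (hfn 0 (mem_closedBall_self hr.le)).contDiffAt (hg 0 (mem_closedBall_self hr.le)).contDiffAt
  simp only [iteratedDeriv_iteratedDeriv, sub_zero, smul_eq_mul] at hleibniz hcauchy
  have hterm : (fun z => schifferTerm ε f n z * g z) =
      fun z => ε ^ (n + 1) / ((n + 1).factorial : ℂ) *
        (1 / z ^ (n + 1) * (iteratedDeriv n f z * g z)) := by
    funext z
    simp only [schifferTerm]
    ring
  rw [hterm, circleIntegral.integral_const_mul, hcauchy, hleibniz, schifferCoeff]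
  ring

theorem continuousOn_schifferTerm {s : Set ℂ} (hf : AnalyticOnNhd ℂ f s) (n : ℕ) :
    ContinuousOn (schifferTerm ε f n) (s \ {0}) :=
  (continuousOn_const.div (continuousOn_const.mul (continuousOn_pow _)) fun _ hz =>
    mul_ne_zero (Nat.cast_ne_zero.2 (Nat.factorial_ne_zero _)) (pow_ne_zero _ hz.2)).mul
    ((hf.iteratedDeriv n).continuousOn.mono Set.sdiff_subset)

theorem hasSum_schifferCoeff (hf : AnalyticOnNhd ℂ f (closedBall 0 R))
    (hg : AnalyticOnNhd ℂ g (closedBall 0 R)) (hr : 0 < r) (hrR : r < R)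
    (hε : ‖ε‖ < r * (R - r)) :
    HasSum (schifferCoeff ε f g)
      ((2 * Real.pi * I)⁻¹ * ∮ z in C(0, r), (∑' n, schifferTerm ε f n z) * g z) := by
  have hsub : closedBall (0 : ℂ) r ⊆ closedBall 0 R := closedBall_subset_closedBall hrR.le
  have hsphere : sphere (0 : ℂ) |r| ⊆ closedBall 0 R \ {0} := fun z hz =>
    ⟨hsub (sphere_subset_closedBall (by rwa [abs_of_pos hr] at hz)),
      ne_of_mem_sphere hz (abs_ne_zero.2 hr.ne')⟩
  obtain ⟨Mf, hMf⟩ :=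
    (isCompact_closedBall (0 : ℂ) R).exists_bound_of_continuousOn hf.continuousOn
  obtain ⟨Mg, hMg⟩ :=
    (isCompact_closedBall (0 : ℂ) R).exists_bound_of_continuousOn hg.continuousOn
  have hratio : ‖ε‖ / (r * (R - r)) < 1 := (div_lt_one (by nlinarith)).2 hε
  have hsum := hasSum_circleIntegral_tsum_of_norm_le
    (F := fun n z => schifferTerm ε f n z * g z)
    (fun n => (((continuousOn_schifferTerm hf n).mul
      (hg.continuousOn.mono Set.sdiff_subset)).mono hsphere).circleIntegrable')
    ((summable_geometric_of_lt_one (by positivity) hratio).mul_left (‖ε‖ * Mf / r)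
      |>.mul_right Mg)
    fun n z hz => by
      have hterm := norm_schifferTerm_le (ε := ε) hf.differentiableOn hMf hr hrR
        (by rwa [abs_of_pos hr] at hz) n
      rw [norm_mul]
      exact mul_le_mul hterm (hMg z (hsphere hz).1) (norm_nonneg _) ((norm_nonneg _).trans hterm)
  simp only [tsum_mul_right, circleIntegral_schifferTerm_mul (hf.mono hsub) (hg.mono hsub) hr]
    at hsum
  simpa [← mul_assoc, Complex.two_pi_I_ne_zero] using hsum.mul_left (2 * Real.pi * I)⁻¹

theorem schiffer_variation_formula_general (R r : ℝ) (f g : ℂ → ℂ) (ε : ℂ)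
    (hf : ∀ z ∈ closedBall (0 : ℂ) R, AnalyticAt ℂ f z)
    (hg : ∀ z ∈ closedBall (0 : ℂ) R, AnalyticAt ℂ g z)
    (hr : 0 < r) (hrR : r < R) (hε : ‖ε‖ < r * (R - r)) :
    (∀ z ∈ sphere (0 : ℂ) r,
        Summable fun n : ℕ =>
          ε ^ (n + 1) / (((n + 1).factorial : ℂ) * z ^ (n + 1)) *
            iteratedDeriv n f z) ∧
      Summable (fun n : ℕ =>
        ε ^ (n + 1) / (((n + 1).factorial : ℂ) * (n.factorial : ℂ)) *
          ∑ p ∈ Finset.HasAntidiagonal.antidiagonal n,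
            (n.choose p.1 : ℂ) * iteratedDeriv (n + p.1) f 0 *
              iteratedDeriv p.2 g 0) ∧
      (2 * Real.pi * Complex.I)⁻¹ *
          (∮ z in C(0, r),
            (∑' n : ℕ,
              ε ^ (n + 1) / (((n + 1).factorial : ℂ) * z ^ (n + 1)) *
                iteratedDeriv n f z) * g z) =
        ∑' n : ℕ,
          ε ^ (n + 1) / (((n + 1).factorial : ℂ) * (n.factorial : ℂ)) *
            ∑ p ∈ Finset.HasAntidiagonal.antidiagonal n,
              (n.choose p.1 : ℂ) * iteratedDeriv (n + p.1) f 0 *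
                iteratedDeriv p.2 g 0 := by
  have hfR : AnalyticOnNhd ℂ f (closedBall 0 R) := hf
  have hgR : AnalyticOnNhd ℂ g (closedBall 0 R) := hg
  have hsum := hasSum_schifferCoeff hfR hgR hr hrR hε
  exact ⟨fun z hz => summable_schifferTerm hfR.differentiableOn hr hrR hε hz,
    hsum.summable, hsum.tsum_eq.symm⟩

/-- The full exact variation formula for the entries of the period matrix under
Schiffer variation (Lemma 3.1 of the paper):
(1/(2πi)) ∮_{|z|=r} (∑_{n≥1} ε^n/(n! z^n) f^{(n-1)}(z)) g(z) dz
  = ∑_{n≥1} ε^n/(n!(n-1)!) ∑_{m+s=n-1} C(n-1,m) f^{(n-1+m)}(0) g^{(s)}(0),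
with both series convergent.  The index is shifted: the `n`-th term (n : ℕ)
corresponds to the paper's index n+1. -/
theorem schiffer_variation_formula (R r : ℝ) (f g : ℂ → ℂ) (ε : ℂ)
    (hR : 0 < R)
    (hf : ∀ z ∈ closedBall (0 : ℂ) R, AnalyticAt ℂ f z)
    (hg : ∀ z ∈ closedBall (0 : ℂ) R, AnalyticAt ℂ g z)
    (hr : 0 < r) (hrR : r < R) (hε : ‖ε‖ < r * (R - r)) :
    (∀ z ∈ sphere (0 : ℂ) r,
        Summable fun n : ℕ =>
          ε ^ (n + 1) / (((n + 1).factorial : ℂ) * z ^ (n + 1)) *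
            iteratedDeriv n f z) ∧
      Summable (fun n : ℕ =>
        ε ^ (n + 1) / (((n + 1).factorial : ℂ) * (n.factorial : ℂ)) *
          ∑ p ∈ Finset.HasAntidiagonal.antidiagonal n,
            (n.choose p.1 : ℂ) * iteratedDeriv (n + p.1) f 0 *
              iteratedDeriv p.2 g 0) ∧
      (2 * Real.pi * Complex.I)⁻¹ *
          (∮ z in C(0, r),
            (∑' n : ℕ,
              ε ^ (n + 1) / (((n + 1).factorial : ℂ) * z ^ (n + 1)) *
                iteratedDeriv n f z) * g z) =
        ∑' n : ℕ,
          ε ^ (n + 1) / (((n + 1).factorial : ℂ) * (n.factorial : ℂ)) *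
            ∑ p ∈ Finset.HasAntidiagonal.antidiagonal n,
              (n.choose p.1 : ℂ) * iteratedDeriv (n + p.1) f 0 *
                iteratedDeriv p.2 g 0 :=
  schiffer_variation_formula_general R r f g ε hf hg hr hrR hε
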